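/- arXiv:0909.0340 — 5 statements merged into one kernel-verified Lean document; each statement's English description precedes it below -/
import Mathlib

section
/- Fix integers n ≥ 1 and m ≥ 0, and set r_{k,m} := 1/(2^k · k! · Π_{l=0}^{k−1}(n+2m−4−2l)) for 0 ≤ k ≤ ⌊m/2⌋ (assuming all factors n+2m−4−2l, 0 ≤ l ≤ 2⌊m/2⌋−2, are nonzero, which holds for n ≥ 1). Then the linear operator P_{harm,m} := Σ_{k=0}^{⌊m/2⌋} r_{k,m} r^{2k} Δ^k : A_m → A_m is the orthogonal projection of A_m onto Harm_m with respect to the differential pairing; equivalently, P_{harm,m}(h) = h for every h ∈ Harm_m and P_{harm,m}(r²f) = 0 for every f ∈ A_{m−2}. -/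
noncomputable section

open MvPolynomial MeasureTheory Finset
open scoped RealInnerProductSpace Manifold

namespace Heat

abbrev Poly (n : ℕ) := MvPolynomial (Fin n) ℝ
abbrev E (n : ℕ) := EuclideanSpace ℝ (Fin n)

variable (n : ℕ)

/-- The differential operator `∂^I` on polynomials. -/
def pdI (I : Fin n →₀ ℕ) : Poly n → Poly n :=
  (List.ofFn fun i : Fin n => (fun p : Poly n => (⇑(pderiv i))^[I i] p)).foldr (· ∘ ·) id

/-- The differential pairing `⟨g, f⟩ = (g(∂)f)(0)`. -/
def dPair (g f : Poly n) : ℝ :=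
  eval 0 (∑ I ∈ g.support, g.coeff I • pdI n I f)

/-- The Laplacian `Δ = -∑ ∂ᵢ²` as a linear map on polynomials. -/
def lap : Poly n →ₗ[ℝ] Poly n :=
  -∑ i : Fin n, ((pderiv i : Derivation ℝ (Poly n) (Poly n)).toLinearMap ∘ₗ
    (pderiv i : Derivation ℝ (Poly n) (Poly n)).toLinearMap)

/-- `r² = ∑ xᵢ²`. -/
def rsq : Poly n := ∑ i : Fin n, X i ^ 2

/-- Harmonic homogeneous polynomials of degree `m`. -/
def Harm (m : ℕ) : Submodule ℝ (Poly n) :=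
  homogeneousSubmodule (Fin n) ℝ m ⊓ LinearMap.ker (lap n)

/-- `B` is an orthonormal basis of the subspace `S` w.r.t. the differential pairing. -/
structure IsONBasis (S : Submodule ℝ (Poly n)) (B : Finset (Poly n)) : Prop where
  mem : ∀ h ∈ B, h ∈ S
  ortho : ∀ h ∈ B, ∀ g ∈ B, dPair n h g = if h = g then 1 else 0
  span : Submodule.span ℝ (B : Set (Poly n)) = S

/-- Evaluation of a polynomial at a point of Euclidean space. -/
def peval (f : Poly n) (x : E n) : ℝ := eval (fun i => x i) f

/-- `μ` is the rotation-invariant probability measure on the unit sphere `S^{n-1}`. -/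
structure IsSphereMeasure (μ : Measure (E n)) : Prop where
  prob : IsProbabilityMeasure μ
  supp : μ (Metric.sphere (0 : E n) 1)ᶜ = 0
  inv : ∀ φ : E n ≃ₗᵢ[ℝ] E n, Measure.map φ μ = μ

/-- The lattice spanned (over `ℤ`) by the vectors `b`. -/
def latticeOf (b : Fin n → E n) : Submodule ℤ (E n) := Submodule.span ℤ (Set.range b)

/-- An integral lattice: all square norms are integers. -/
def IsIntegral (L : Submodule ℤ (E n)) : Prop := ∀ v ∈ L, ∃ z : ℤ, ‖v‖ ^ 2 = (z : ℝ)

/-- The matrix `A` with `½A` the Gram matrix of the basis `b`. -/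
def evenGram (b : Fin n → E n) : Matrix (Fin n) (Fin n) ℝ :=
  Matrix.of fun i j => 2 * ⟪b i, b j⟫

/-- A real matrix has integer entries and even diagonal. -/
def IntEvenDiag (M : Matrix (Fin n) (Fin n) ℝ) : Prop :=
  (∀ i j, ∃ z : ℤ, M i j = (z : ℝ)) ∧ ∀ i, ∃ z : ℤ, M i i = 2 * (z : ℝ)

/-- `N` is the level of the lattice with basis `b`. -/
def IsLevel (b : Fin n → E n) (N : ℕ) : Prop :=
  0 < N ∧ IntEvenDiag n ((N : ℝ) • (evenGram n b)⁻¹) ∧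
    ∀ M : ℕ, 0 < M → IntEvenDiag n ((M : ℝ) • (evenGram n b)⁻¹) → N ≤ M

/-- The spherical theta function `Θ_{h,Λ}`. -/
def theta (h : Poly n) (L : Submodule ℤ (E n)) (τ : UpperHalfPlane) : ℂ :=
  ∑' v : L, (peval n h (v : E n) : ℂ) *
    Complex.exp (2 * (Real.pi : ℂ) * Complex.I * ((‖(v : E n)‖ ^ 2 : ℝ) : ℂ) * (τ : ℂ))

/-- The image of the lattice `L` under an isometry of Euclidean space. -/
def mapLat (φ : E n ≃ₗᵢ[ℝ] E n) (L : Submodule ℤ (E n)) : Submodule ℤ (E n) :=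
  L.map (φ.toLinearEquiv.toLinearMap.restrictScalars ℤ)

/-- The Kronecker symbol at 2, `(a/2)`. -/
def kronAtTwo (a : ℤ) : ℤ :=
  if a % 2 = 0 then 0 else if a % 8 = 1 ∨ a % 8 = 7 then 1 else -1

/-- The Kronecker symbol `(a/m)`. -/
def kronSym (a m : ℤ) : ℤ :=
  if m = 0 then (if a = 1 ∨ a = -1 then 1 else 0)
  else
    (if m < 0 ∧ a < 0 then -1 else 1) *
      kronAtTwo a ^ (m.natAbs.factorization 2) *
      jacobiSym a (m.natAbs / 2 ^ (m.natAbs.factorization 2))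

open UpperHalfPlane in
/-- `f` is a modular form of weight `w`, level `N` and character `χ`:  it is holomorphic
on the upper half plane, transforms under `Γ₀(N)` with automorphy factor `χ(d)(cτ+d)^w`,
and is bounded towards all cusps. -/
structure IsModularForm (N : ℕ) (w : ℝ) (χ : ℤ → ℤ) (f : UpperHalfPlane → ℂ) : Prop where
  holo : MDifferentiable 𝓘(ℂ) 𝓘(ℂ) f
  transf : ∀ γ : Matrix.SpecialLinearGroup (Fin 2) ℤ, γ ∈ CongruenceSubgroup.Gamma0 N →
    ∀ τ : UpperHalfPlane, f (γ • τ) =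
      ((χ ((γ : Matrix (Fin 2) (Fin 2) ℤ) 1 1) : ℝ) : ℂ) *
      (((((γ : Matrix (Fin 2) (Fin 2) ℤ) 1 0 : ℤ) : ℂ)) * (τ : ℂ) +
        (((γ : Matrix (Fin 2) (Fin 2) ℤ) 1 1 : ℤ) : ℂ)) ^ (w : ℂ) * f τ
  bdd : ∀ γ : Matrix.SpecialLinearGroup (Fin 2) ℤ,
    IsBoundedAtImInfty fun τ : UpperHalfPlane =>
      (((((γ : Matrix (Fin 2) (Fin 2) ℤ) 1 0 : ℤ) : ℂ)) * (τ : ℂ) +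
        (((γ : Matrix (Fin 2) (Fin 2) ℤ) 1 1 : ℤ) : ℂ)) ^ (-(w : ℂ)) * f (γ • τ)

/-- The trivial character. -/
def trivChar : ℤ → ℤ := fun _ => 1

open scoped Classical in
/-- The multiple theta series `Θ_{m₁,…,m_k,Λ}` attached to a family of bases `B i`. -/
def thetaMulti (k : ℕ) (B : Fin k → Finset (Poly n)) (L : Submodule ℤ (E n))
    (μ : Measure (E n)) (τ : UpperHalfPlane) : ℂ :=
  ∑ g ∈ Fintype.piFinset B,
    (∏ i, theta n (g i) L τ) * (((∫ x, ∏ i, peval n (g i) x ∂μ) : ℝ) : ℂ)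

/-- The polynomial `p_m` (evaluated at `c`). -/
def pmVal (m : ℕ) (c : ℝ) : ℝ :=
  ∑ k ∈ Finset.range (m + 1),
    (-1 : ℝ) ^ k * c ^ (2 * m - 2 * k) /
      ((Nat.factorial (2 * m - 2 * k) : ℝ) * (Nat.factorial k : ℝ) * 2 ^ k *
        ∏ l ∈ Finset.range k, ((n : ℝ) + 4 * m - 4 - 2 * l))

/-- The heat flux `f_Λ` of the lattice `L`. -/
def heatF (L : Submodule ℤ (E n)) (t : ℝ) (x : E n) : ℝ :=
  (4 * Real.pi * t) ^ (-(n : ℝ) / 2) * ∑' γ : L, Real.exp (-‖x - (γ : E n)‖ ^ 2 / (4 * t))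

/-- Partial derivative of a function on Euclidean space. -/
def pdFun (i : Fin n) (F : E n → ℝ) : E n → ℝ := fun x => fderiv ℝ F x (EuclideanSpace.single i 1)

/-- Iterated partial derivative `∂^I` of a function on Euclidean space. -/
def pdIFun (I : Fin n →₀ ℕ) : (E n → ℝ) → (E n → ℝ) :=
  (List.ofFn fun i : Fin n => (fun F : E n → ℝ => (pdFun n i)^[I i] F)).foldr (· ∘ ·) id

/-- The differential operator `g(∂)` applied to a smooth function. -/
def applyDiff (g : Poly n) (F : E n → ℝ) (x : E n) : ℝ :=
  ∑ I ∈ g.support, g.coeff I * pdIFun n I F x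

open scoped Classical in
/-- The degree `2m` homogeneous term of the Taylor expansion of `x ↦ f_Λ(t,x)` at `0`. -/
def taylorTerm (L : Submodule ℤ (E n)) (m : ℕ) (t : ℝ) : Poly n :=
  ∑ c ∈ (Fintype.piFinset fun _ : Fin n => Finset.range (2 * m + 1)).filter
      (fun c => ∑ i, c i = 2 * m),
    (pdIFun n (Finsupp.equivFunOnFinite.symm c) (heatF n L t) 0 /
      ∏ i, (Nat.factorial (c i) : ℝ)) • ∏ i, X i ^ c i

/-- `P` is the orthogonal projection of `A_m` onto `Harm_m` w.r.t. the differential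
pairing: on `A_m` it takes values in `Harm_m`, `f - P f` is orthogonal to `Harm_m`,
and it is the identity on `Harm_m`. -/
def IsHarmProj (m : ℕ) (P : Poly n → Poly n) : Prop :=
  (∀ f ∈ homogeneousSubmodule (Fin n) ℝ m, P f ∈ Harm n m ∧
    ∀ h ∈ Harm n m, dPair n h (f - P f) = 0) ∧
  ∀ h ∈ Harm n m, P h = h

/-- The `E₈` lattice as a subset of `ℝ⁸`. -/
def E8set : Set (E 8) :=
  {x | ((∀ i, ∃ z : ℤ, x i = (z : ℝ)) ∨ (∀ i, ∃ z : ℤ, x i = (z : ℝ) + 1 / 2)) ∧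
    ∃ z : ℤ, (∑ i, x i) = 2 * (z : ℝ)}

end Heat

namespace Heat

variable (n : ℕ)

/-- The operator `P_{harm,m} = ∑_{k=0}^{⌊m/2⌋} r_{k,m} · r^{2k} Δ^k` on polynomials. -/
def PharmOp (m : ℕ) : Poly n → Poly n := fun f =>
  ∑ k ∈ Finset.range (m / 2 + 1),
    (1 / ((2 : ℝ) ^ k * (Nat.factorial k : ℝ) *
      ∏ l ∈ Finset.range k, ((n : ℝ) + 2 * (m : ℝ) - 4 - 2 * (l : ℝ)))) •
      (rsq n ^ k * ((lap n ^ k) f))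

/-- The quantity `Ξ(u,v,w)`. -/
def Xi (u v w : E n) : ℝ :=
  2 * ‖u‖ ^ 2 * ‖v‖ ^ 2 * ‖w‖ ^ 2 -
    (n : ℝ) * (‖u‖ ^ 2 * ⟪v, w⟫ ^ 2 + ‖v‖ ^ 2 * ⟪u, w⟫ ^ 2 + ‖w‖ ^ 2 * ⟪u, v⟫ ^ 2) +
    (n : ℝ) ^ 2 * ⟪v, w⟫ * ⟪u, w⟫ * ⟪u, v⟫

/-- The `k`-th coefficient of the claimed q-expansion of `Θ_{m,m,Λ}`. -/
def mmCoeff (m : ℕ) (L : Submodule ℤ (E n)) (k : ℕ) : ℝ :=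
  ∑' p : {p : L × L // (p.1 : E n) ≠ 0 ∧ (p.2 : E n) ≠ 0 ∧
      ‖(p.1 : E n)‖ ^ 2 + ‖(p.2 : E n)‖ ^ 2 = (k : ℝ)},
    pmVal n m (⟪(p.1.1 : E n), (p.1.2 : E n)⟫ / (‖(p.1.1 : E n)‖ * ‖(p.1.2 : E n)‖)) *
      ‖(p.1.1 : E n)‖ ^ (2 * m) * ‖(p.1.2 : E n)‖ ^ (2 * m)

/-- The sum `∑ Ξ(u,v,w)` over lattice triples of total square norm `k`. -/
def tripleCoeff (L : Submodule ℤ (E n)) (k : ℕ) : ℝ :=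
  ∑' t : {t : L × L × L //
      ‖(t.1 : E n)‖ ^ 2 + ‖(t.2.1 : E n)‖ ^ 2 + ‖(t.2.2 : E n)‖ ^ 2 = (k : ℝ)},
    Xi n (t.1.1 : E n) (t.1.2.1 : E n) (t.1.2.2 : E n)

/-- The generalized binomial coefficient `C(z,k) = z(z-1)⋯(z-k+1)/k!`. -/
def genBinom (z : ℝ) (k : ℕ) : ℝ :=
  (∏ a ∈ Finset.range k, (z - (a : ℝ))) / (Nat.factorial k : ℝ)

open scoped Classical in
/-- The monomial orthonormal basis `{xᵢ²/√2} ∪ {xᵢxⱼ, i<j}` of `A₂`. -/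
def B2 : Finset (Poly n) :=
  (Finset.univ.image fun i : Fin n => (Real.sqrt 2)⁻¹ • (X i ^ 2 : Poly n)) ∪
  ((Finset.univ.filter fun p : Fin n × Fin n => p.1 < p.2).image
    fun p => (X p.1 * X p.2 : Poly n))

/-- The explicit harmonic projection in degree two, `P = id + (1/(2n)) r² Δ`. -/
def P2 : Poly n → Poly n := fun g => g + (1 / (2 * (n : ℝ))) • (rsq n * lap n g)

end Heat
namespace Heat

/-! The pairing is `⟨g, f⟩ = ∑_I g_I f_I I!`, for which multiplication by `xᵢ` is adjoint to `∂ᵢ`.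
Hence multiplication by `r²` is adjoint to `-Δ`: harmonic polynomials are orthogonal to `r² A`,
and by positive definiteness no nonzero harmonic polynomial is divisible by `r²`.

For `g` homogeneous of degree `d`,
`Δ(r^{2k+2} g) = r^{2k+2} Δg - 2(k+1)(n+2d+2k) r^{2k} g`, and the coefficients `r_{k,m}` satisfy
exactly the recursion that makes `Δ(P f)` telescope to a multiple of `Δ^{⌊m/2⌋+1} f = 0`.
Since `f - P f` is divisible by `r²`, `P f` is the harmonic component of `f`; for `f = r² g` it is
both harmonic and divisible by `r²`, hence zero. -/

section PartialDerivatives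

variable {σ R : Type*} [CommSemiring R]

theorem coeff_iterate_pderiv (i : σ) (k : ℕ) (s : σ →₀ ℕ) (f : MvPolynomial σ R) :
    coeff s ((⇑(pderiv i))^[k] f) =
      coeff (s + Finsupp.single i k) f * ((s i + 1).ascFactorial k : R) := by
  induction k generalizing f with
  | zero => simp
  | succ k ih =>
    rw [Function.iterate_succ_apply, ih, coeff_pderiv, add_assoc, ← Finsupp.single_add,
      Nat.ascFactorial_succ]
    simp only [Finsupp.add_apply, Finsupp.single_eq_same]
    push_cast
    ring

theorem coeff_foldr_iterate_pderiv (I : σ →₀ ℕ) {l : List σ} (hl : l.Nodup) {s : σ →₀ ℕ}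
    (hs : ∀ i ∈ l, s i = 0) (f : MvPolynomial σ R) :
    coeff s ((l.map fun i => (⇑(pderiv i))^[I i]).foldr (· ∘ ·) id f) =
      coeff (s + (l.map fun i => Finsupp.single i (I i)).sum) f *
        (l.map fun i => ((I i).factorial : R)).prod := by
  induction l generalizing s with
  | nil => simp
  | cons a l ih =>
    obtain ⟨hal, hl⟩ := List.nodup_cons.mp hl
    have hs' : ∀ i ∈ l, (s + Finsupp.single a (I a)) i = 0 := fun i hi => by
      simp [hs i (List.mem_cons_of_mem a hi), show a ≠ i from fun h => hal (h ▸ hi)]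
    simp only [List.map_cons, List.foldr_cons, Function.comp_apply, List.sum_cons,
      List.prod_cons]
    rw [coeff_iterate_pderiv, ih hl hs', hs a List.mem_cons_self, zero_add,
      Nat.one_ascFactorial, add_assoc]
    ring

theorem pderiv_eq_zero_of_isHomogeneous_zero {f : MvPolynomial σ R} (hf : f.IsHomogeneous 0)
    (i : σ) : pderiv i f = 0 := by
  rw [← totalDegree_zero_iff_isHomogeneous, totalDegree_eq_zero_iff_eq_C] at hf
  rw [hf, pderiv_C]

theorem prod_factorial_add_single [Fintype σ] (I : σ →₀ ℕ) (i : σ) :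
    ∏ j, (((I + Finsupp.single i 1 : σ →₀ ℕ) j).factorial : ℝ) =
      (I i + 1) * ∏ j, ((I j).factorial : ℝ) := by
  classical
  have h : ∀ j, (((I + Finsupp.single i 1 : σ →₀ ℕ) j).factorial : ℝ) =
      (if j = i then (I i + 1 : ℝ) else 1) * (I j).factorial := fun j => by
    rcases eq_or_ne j i with rfl | hj
    · simp [Nat.factorial_succ]
    · simp [hj]
  simp only [h, Finset.prod_mul_distrib, Finset.prod_ite_eq', Finset.mem_univ, if_true]

end PartialDerivatives

variable {n : ℕ}

theorem lap_apply (f : Poly n) : lap n f = -∑ i, pderiv i (pderiv i f) := by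
  simp [lap]

theorem coeff_zero_pdI (I : Fin n →₀ ℕ) (f : Poly n) :
    coeff 0 (pdI n I f) = coeff I f * ∏ i, ((I i).factorial : ℝ) := by
  have h := coeff_foldr_iterate_pderiv I (List.nodup_ofFn.mpr Function.injective_id)
    (s := 0) (fun _ _ => rfl) f
  simp only [List.map_ofFn, List.sum_ofFn, List.prod_ofFn, Function.comp_id, zero_add,
    Finsupp.univ_sum_single] at h
  exact h

theorem dPair_eq_sum (g f : Poly n) {S : Finset (Fin n →₀ ℕ)} (hS : g.support ⊆ S) :
    dPair n g f = ∑ I ∈ S, g.coeff I * (f.coeff I * ∏ i, ((I i).factorial : ℝ)) := by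
  rw [dPair, MvPolynomial.eval_zero, constantCoeff_eq, coeff_sum,
    Finset.sum_subset hS fun I _ hI => by simp [notMem_support_iff.mp hI]]
  simp only [coeff_smul, coeff_zero_pdI, smul_eq_mul]

theorem dPair_comm (g f : Poly n) : dPair n g f = dPair n f g := by
  rw [dPair_eq_sum g f Finset.subset_union_left, dPair_eq_sum f g Finset.subset_union_right]
  exact Finset.sum_congr rfl fun I _ => by ring

theorem dPair_sum_right {ι : Type*} (g : Poly n) (s : Finset ι) (f : ι → Poly n) :
    dPair n g (∑ j ∈ s, f j) = ∑ j ∈ s, dPair n g (f j) := by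
  simp only [dPair_eq_sum g _ subset_rfl, coeff_sum, Finset.sum_mul, Finset.mul_sum]
  exact Finset.sum_comm

theorem dPair_self_eq_zero_iff (g : Poly n) : dPair n g g = 0 ↔ g = 0 := by
  refine ⟨fun h => ?_, fun h => by simp [h, dPair_eq_sum 0 0 subset_rfl]⟩
  rw [dPair_eq_sum g g subset_rfl, Finset.sum_eq_zero_iff_of_nonneg fun I _ => by
    rw [← mul_assoc]; exact mul_nonneg (mul_self_nonneg _) (by positivity)] at h
  ext I
  by_contra hI
  have hfac : (0 : ℝ) < ∏ i, ((I i).factorial : ℝ) := by positivity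
  have := h I (mem_support_iff.mpr hI)
  simp_all

theorem dPair_X_mul (i : Fin n) (g f : Poly n) :
    dPair n (X i * g) f = dPair n g (pderiv i f) := by
  rw [dPair_eq_sum _ f subset_rfl, support_X_mul, Finset.sum_map, dPair_eq_sum g _ subset_rfl]
  refine Finset.sum_congr rfl fun I _ => ?_
  rw [addLeftEmbedding_apply, coeff_X_mul, add_comm, coeff_pderiv, prod_factorial_add_single]
  ring

theorem dPair_rsq_mul_eq_zero {h : Poly n} (hh : lap n h = 0) (q : Poly n) :
    dPair n h (rsq n * q) = 0 := by
  have hh' : ∑ i, pderiv i (pderiv i h) = 0 := by simpa [lap_apply] using hh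
  have hr : rsq n * q = ∑ i, X i * (X i * q) := by
    simp only [rsq, Finset.sum_mul]
    exact Finset.sum_congr rfl fun i _ => by ring
  rw [hr, dPair_sum_right]
  simp only [dPair_comm h, dPair_X_mul]
  rw [← dPair_sum_right, hh']
  simp [dPair_eq_sum q 0 subset_rfl]

theorem eq_zero_of_lap_eq_zero_of_eq_rsq_mul {h q : Poly n} (hh : lap n h = 0)
    (hq : h = rsq n * q) : h = 0 := by
  rw [← dPair_self_eq_zero_iff]
  nth_rewrite 2 [hq]
  exact dPair_rsq_mul_eq_zero hh q

theorem isHomogeneous_lap {f : Poly n} {d : ℕ} (hf : f.IsHomogeneous d) :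
    (lap n f).IsHomogeneous (d - 2) := by
  rw [lap_apply]
  refine (IsHomogeneous.sum _ _ _ fun i _ => ?_).neg
  simpa only [Nat.sub_sub] using hf.pderiv.pderiv

theorem lap_eq_zero_of_isHomogeneous {f : Poly n} {d : ℕ} (hf : f.IsHomogeneous d)
    (hd : d ≤ 1) : lap n f = 0 := by
  have hf0 : ∀ i, (pderiv i f).IsHomogeneous 0 := fun i => by
    simpa only [Nat.sub_eq_zero_of_le hd] using hf.pderiv
  simp [lap_apply, pderiv_eq_zero_of_isHomogeneous_zero (hf0 _)]

theorem lap_pow_succ_apply (k : ℕ) (f : Poly n) :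
    (lap n ^ (k + 1)) f = lap n ((lap n ^ k) f) := by
  rw [pow_succ']; rfl

theorem isHomogeneous_lap_pow {f : Poly n} {m : ℕ} (hf : f.IsHomogeneous m) (k : ℕ) :
    ((lap n ^ k) f).IsHomogeneous (m - 2 * k) := by
  induction k with
  | zero => simpa using hf
  | succ k ih =>
    simpa only [lap_pow_succ_apply, Nat.sub_sub, mul_add_one] using isHomogeneous_lap ih

theorem lap_pow_eq_zero {f : Poly n} {m k : ℕ} (hf : f.IsHomogeneous m) (hk : m < 2 * k) :
    (lap n ^ k) f = 0 := by
  induction k with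
  | zero => omega
  | succ k ih =>
    rw [lap_pow_succ_apply]
    rcases Nat.lt_or_ge m (2 * k) with h | h
    · rw [ih h, map_zero]
    · exact lap_eq_zero_of_isHomogeneous (isHomogeneous_lap_pow hf k) (by omega)

theorem pderiv_rsq (i : Fin n) : pderiv i (rsq n) = 2 * X i := by
  simp [rsq, pderiv_X, Pi.single_apply]

theorem isHomogeneous_rsq : (rsq n).IsHomogeneous 2 :=
  IsHomogeneous.sum _ _ _ fun i _ => by simpa using (isHomogeneous_X ℝ i).pow 2

theorem lap_rsq_mul {g : Poly n} {d : ℕ} (hg : g.IsHomogeneous d) :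
    lap n (rsq n * g) = rsq n * lap n g - (2 * n + 4 * d : ℝ) • g := by
  have hderiv : ∀ i, pderiv i (pderiv i (rsq n * g)) =
      rsq n * pderiv i (pderiv i g) + 4 * (X i * pderiv i g) + 2 * g := fun i => by
    have h2 : pderiv i (2 : Poly n) = 0 := by simpa using (pderiv i).map_natCast 2
    simp only [Derivation.leibniz, pderiv_rsq, smul_eq_mul, map_add, pderiv_X_self, h2]
    ring
  simp only [lap_apply, hderiv, Finset.sum_add_distrib, ← Finset.mul_sum, hg.sum_X_mul_pderiv,
    Finset.sum_const, Finset.card_univ, Fintype.card_fin, smul_eq_C_mul, nsmul_eq_mul]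
  simp only [map_add, map_mul, map_natCast, map_ofNat]
  ring

theorem lap_rsq_pow_succ_mul {g : Poly n} {d : ℕ} (hg : g.IsHomogeneous d) (k : ℕ) :
    lap n (rsq n ^ (k + 1) * g) = rsq n ^ (k + 1) * lap n g -
      (2 * (k + 1) * (n + 2 * d + 2 * k) : ℝ) • (rsq n ^ k * g) := by
  induction k with
  | zero =>
    rw [zero_add, pow_one, pow_zero, one_mul, lap_rsq_mul hg]
    congr 2
    push_cast
    ring
  | succ k ih =>
    have hdeg : (rsq n ^ (k + 1) * g).IsHomogeneous (2 * (k + 1) + d) :=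
      (isHomogeneous_rsq.pow (k + 1)).mul hg
    rw [pow_succ' _ (k + 1), mul_assoc, lap_rsq_mul hdeg, ih]
    simp only [smul_eq_C_mul, map_add, map_mul, map_natCast, map_ofNat, map_one, Nat.cast_add,
      Nat.cast_mul, Nat.cast_ofNat, Nat.cast_one]
    ring

def harmCoeff (n m k : ℕ) : ℝ :=
  1 / ((2 : ℝ) ^ k * (Nat.factorial k : ℝ) *
    ∏ l ∈ Finset.range k, ((n : ℝ) + 2 * (m : ℝ) - 4 - 2 * (l : ℝ)))

theorem PharmOp_eq_sum (m : ℕ) (f : Poly n) :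
    PharmOp n m f = ∑ k ∈ Finset.range (m / 2 + 1),
      harmCoeff n m k • (rsq n ^ k * (lap n ^ k) f) := rfl

theorem harmCoeff_zero (m : ℕ) : harmCoeff n m 0 = 1 := by
  simp [harmCoeff]

theorem harmCoeff_eq_mul_succ (hn : 1 ≤ n) {m k : ℕ} (hk : k + 1 ≤ m / 2) :
    harmCoeff n m k =
      harmCoeff n m (k + 1) * (2 * (k + 1) * (n + 2 * m - 4 - 2 * k)) := by
  have hfactor : ∀ l ≤ k, (0 : ℝ) < n + 2 * m - 4 - 2 * l := fun l hl => by
    have : (2 * l + 2 : ℝ) ≤ m := by exact_mod_cast (show 2 * l + 2 ≤ m by omega)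
    have : (1 : ℝ) ≤ n := by exact_mod_cast hn
    linarith
  have hprod : (0 : ℝ) < ∏ l ∈ Finset.range k, ((n : ℝ) + 2 * m - 4 - 2 * l) :=
    Finset.prod_pos fun l hl => hfactor l (Finset.mem_range.mp hl).le
  have hfk := hfactor k le_rfl
  rw [harmCoeff, harmCoeff, Finset.prod_range_succ, pow_succ, Nat.factorial_succ]
  push_cast
  field_simp

theorem isHomogeneous_PharmOp {m : ℕ} {f : Poly n} (hf : f.IsHomogeneous m) :
    (PharmOp n m f).IsHomogeneous m := by
  refine IsHomogeneous.sum _ _ _ fun k hk => ?_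
  have h2k : 2 * k ≤ m := by have := Finset.mem_range.mp hk; omega
  rw [smul_eq_C_mul]
  refine IsHomogeneous.C_mul ?_ _
  convert (isHomogeneous_rsq.pow k).mul (isHomogeneous_lap_pow hf k) using 1
  omega

theorem lap_PharmOp (hn : 1 ≤ n) {m : ℕ} {f : Poly n} (hf : f.IsHomogeneous m) :
    lap n (PharmOp n m f) = 0 := by
  set T : ℕ → Poly n := fun k => harmCoeff n m k • (rsq n ^ k * (lap n ^ (k + 1)) f)
  have hstep : ∀ k < m / 2,
      lap n (harmCoeff n m (k + 1) • (rsq n ^ (k + 1) * (lap n ^ (k + 1)) f)) =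
        T (k + 1) - T k := fun k hk => by
    have hdeg : ((m - 2 * (k + 1) : ℕ) : ℝ) = m - 2 * k - 2 := by
      push_cast [show 2 * (k + 1) ≤ m by omega]
      ring
    rw [map_smul, lap_rsq_pow_succ_mul (isHomogeneous_lap_pow hf (k + 1)), hdeg,
      ← lap_pow_succ_apply, smul_sub, smul_smul]
    simp only [T]
    rw [harmCoeff_eq_mul_succ hn hk]
    congr 3
    ring
  have hlast : T (m / 2) = 0 := by
    simp [T, lap_pow_eq_zero hf (show m < 2 * (m / 2 + 1) by omega)]
  rw [PharmOp_eq_sum, map_sum, Finset.sum_range_succ',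
    Finset.sum_congr rfl fun k hk => hstep k (Finset.mem_range.mp hk), Finset.sum_range_sub,
    hlast]
  simp [T, harmCoeff_zero, lap_pow_succ_apply]

theorem PharmOp_of_lap_eq_zero (m : ℕ) {h : Poly n} (hh : lap n h = 0) : PharmOp n m h = h := by
  rw [PharmOp_eq_sum, Finset.sum_range_succ']
  simp [harmCoeff_zero, pow_succ, hh]

theorem exists_sub_PharmOp_eq_rsq_mul (m : ℕ) (f : Poly n) :
    ∃ q, f - PharmOp n m f = rsq n * q := by
  refine ⟨-∑ k ∈ Finset.range (m / 2),
    harmCoeff n m (k + 1) • (rsq n ^ k * (lap n ^ (k + 1)) f), ?_⟩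
  rw [PharmOp_eq_sum, Finset.sum_range_succ', mul_neg, Finset.mul_sum]
  simp [harmCoeff_zero, ← mul_assoc, ← pow_succ']

theorem PharmOp_rsq_mul_eq_zero (hn : 1 ≤ n) {j m : ℕ} (hjm : j + 2 = m) {f : Poly n}
    (hf : f.IsHomogeneous j) : PharmOp n m (rsq n * f) = 0 := by
  have hdeg : (rsq n * f).IsHomogeneous m := by
    simpa [← hjm, add_comm] using isHomogeneous_rsq.mul hf
  obtain ⟨q, hq⟩ := exists_sub_PharmOp_eq_rsq_mul m (rsq n * f)
  refine eq_zero_of_lap_eq_zero_of_eq_rsq_mul (lap_PharmOp hn hdeg) (q := f - q) ?_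
  linear_combination -hq

/-- the operator `P_{harm,m} = ∑ r_{k,m} r^{2k} Δ^k` is the orthogonal
projection of `A_m` onto `Harm_m`: it is the identity on harmonic polynomials and
kills `r² A_{m-2}`. -/
theorem statement2 (n m : ℕ) (hn : 1 ≤ n) :
    IsHarmProj n m (PharmOp n m) ∧
    (∀ h ∈ Harm n m, PharmOp n m h = h) ∧
    ∀ j : ℕ, j + 2 = m → ∀ f ∈ homogeneousSubmodule (Fin n) ℝ j,
      PharmOp n m (rsq n * f) = 0 := by
  have hid : ∀ h ∈ Harm n m, PharmOp n m h = h := fun h hh => PharmOp_of_lap_eq_zero m hh.2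
  refine ⟨⟨fun f hf => ⟨⟨isHomogeneous_PharmOp hf, lap_PharmOp hn hf⟩, fun h hh => ?_⟩, hid⟩,
    hid, fun j hj f hf => PharmOp_rsq_mul_eq_zero hn hj hf⟩
  obtain ⟨q, hq⟩ := exists_sub_PharmOp_eq_rsq_mul m f
  rw [hq]
  exact dPair_rsq_mul_eq_zero hh.2 q

end Heat
end
end

section
/- Let n ≥ 1 and m ≥ 1 be integers and let v, w ∈ ℝⁿ satisfy ‖v‖² ∈ ℤ, ‖w‖² ∈ ℤ and ⟨v,w⟩ ∈ ½ℤ. Then δ_m(v,w) := Σ_{k=0}^m (−1)^k · ((2m)!/((2m−2k)!·k!)) · 2^{2m−k} · ⟨v,w⟩^{2m−2k} · ‖v‖^{2k}‖w‖^{2k} · Π_{l=k}^{m−1}(n+4m−4−2l) is an integer; moreover, if v and w are nonzero then δ_m(v,w) = (2m)! · 2^{2m} · Π_{l=0}^{m−1}(n+4m−4−2l) · p_m(⟨v,w⟩/(‖v‖‖w‖)) · ‖v‖^{2m}‖w‖^{2m}. -/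
noncomputable section

open MvPolynomial MeasureTheory Finset
open scoped RealInnerProductSpace Manifold

namespace Heat

open Nat in
theorem cast_factorial_div_factorial_mul_factorial {K : Type*} [Field K] [CharZero K]
    {N j k : ℕ} (hkj : k ≤ j) (hjN : j ≤ N) :
    (N ! : K) / ((N - j)! * k !) = ((N.choose j * j.descFactorial (j - k) : ℕ) : K) := by
  rw [div_eq_iff (by exact_mod_cast mul_ne_zero (factorial_ne_zero _) (factorial_ne_zero _))]
  have hN := choose_mul_factorial_mul_factorial hjN
  have hj := factorial_mul_descFactorial (Nat.sub_le j k)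
  rw [Nat.sub_sub_self hkj] at hj
  rw [← hN, ← hj]
  push_cast
  ring

/-- `δ_m` as a function of `s = ⟪v, w⟫`, `x = ‖v‖` and `y = ‖w‖`. -/
def delta (n m : ℕ) (s x y : ℝ) : ℝ :=
  ∑ k ∈ Finset.range (m + 1), (-1 : ℝ) ^ k *
    ((Nat.factorial (2 * m) : ℝ) /
      ((Nat.factorial (2 * m - 2 * k) : ℝ) * (Nat.factorial k : ℝ))) *
    2 ^ (2 * m - k) * s ^ (2 * m - 2 * k) * x ^ (2 * k) * y ^ (2 * k) *
    ∏ l ∈ Finset.Ico k m, ((n : ℝ) + 4 * (m : ℝ) - 4 - 2 * (l : ℝ))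

theorem delta_exists_int_eq (n m : ℕ) {s x y : ℝ} (hs : ∃ c : ℤ, s = c / 2)
    (hx : ∃ a : ℤ, x ^ 2 = a) (hy : ∃ b : ℤ, y ^ 2 = b) :
    ∃ z : ℤ, delta n m s x y = z := by
  obtain ⟨c, rfl⟩ := hs
  obtain ⟨a, ha⟩ := hx
  obtain ⟨b, hb⟩ := hy
  refine ⟨∑ k ∈ Finset.range (m + 1), (-1) ^ k *
    (((2 * m).choose (2 * k) * (2 * k).descFactorial (2 * k - k) : ℕ) : ℤ) *
      2 ^ k * c ^ (2 * m - 2 * k) * a ^ k * b ^ k *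
      ∏ l ∈ Finset.Ico k m, ((n : ℤ) + 4 * m - 4 - 2 * l), ?_⟩
  push_cast
  refine Finset.sum_congr rfl fun k hk => ?_
  have hkm : k ≤ m := Nat.lt_succ_iff.mp (Finset.mem_range.mp hk)
  -- the `2 ^ (2m - 2k)` denominators of `s ^ (2m - 2k)` cancel against `2 ^ (2m - k)`
  have h2 : (2 : ℝ) ^ (2 * m - k) = 2 ^ (2 * m - 2 * k) * 2 ^ k := by
    rw [← pow_add]; congr 1; omega
  rw [cast_factorial_div_factorial_mul_factorial (by omega) (by omega), pow_mul, pow_mul,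
    ha, hb, h2, div_pow]
  push_cast
  field_simp

theorem delta_eq_pmVal (n m : ℕ) {s x y : ℝ}
    (hprod : ∏ l ∈ Finset.range m, ((n : ℝ) + 4 * (m : ℝ) - 4 - 2 * (l : ℝ)) ≠ 0)
    (hx : x ≠ 0) (hy : y ≠ 0) :
    delta n m s x y = (Nat.factorial (2 * m) : ℝ) * 2 ^ (2 * m) *
      (∏ l ∈ Finset.range m, ((n : ℝ) + 4 * (m : ℝ) - 4 - 2 * (l : ℝ))) *
      pmVal n m (s / (x * y)) * x ^ (2 * m) * y ^ (2 * m) := by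
  rw [delta, pmVal, Finset.mul_sum, Finset.sum_mul, Finset.sum_mul]
  refine Finset.sum_congr rfl fun k hk => ?_
  have hkm : k ≤ m := Nat.lt_succ_iff.mp (Finset.mem_range.mp hk)
  have hsplit := (Finset.prod_range_mul_prod_Ico
    (fun l : ℕ => (n : ℝ) + 4 * (m : ℝ) - 4 - 2 * (l : ℝ)) hkm).symm
  have hprefix := left_ne_zero_of_mul (hsplit ▸ hprod)
  have hsplit_pow : ∀ t : ℝ, t ^ (2 * m) = t ^ (2 * m - 2 * k) * t ^ (2 * k) := fun t => by
    rw [← pow_add]; congr 1; omega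
  have h2 : (2 : ℝ) ^ (2 * m) = 2 ^ (2 * m - k) * 2 ^ k := by
    rw [← pow_add]; congr 1; omega
  rw [hsplit, hsplit_pow x, hsplit_pow y, h2, div_pow, mul_pow]
  field_simp

theorem prod_shifted_pos (n m : ℕ) (hn : 1 ≤ n) :
    0 < ∏ l ∈ Finset.range m, ((n : ℝ) + 4 * (m : ℝ) - 4 - 2 * (l : ℝ)) := by
  refine Finset.prod_pos fun l hl => ?_
  have hlm : (l : ℝ) + 1 ≤ m := by exact_mod_cast Finset.mem_range.mp hl
  have hn' : (1 : ℝ) ≤ n := by exact_mod_cast hn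
  linarith

theorem statement7_general (n m : ℕ) (hn : 1 ≤ n)
    (v w : E n)
    (hv : ∃ a : ℤ, ‖v‖ ^ 2 = (a : ℝ)) (hw : ∃ a : ℤ, ‖w‖ ^ 2 = (a : ℝ))
    (hvw : ∃ a : ℤ, ⟪v, w⟫ = (a : ℝ) / 2) :
    (∃ z : ℤ,
      ∑ k ∈ Finset.range (m + 1), (-1 : ℝ) ^ k *
        ((Nat.factorial (2 * m) : ℝ) /
          ((Nat.factorial (2 * m - 2 * k) : ℝ) * (Nat.factorial k : ℝ))) *
        2 ^ (2 * m - k) * ⟪v, w⟫ ^ (2 * m - 2 * k) * ‖v‖ ^ (2 * k) * ‖w‖ ^ (2 * k) *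
        ∏ l ∈ Finset.Ico k m, ((n : ℝ) + 4 * (m : ℝ) - 4 - 2 * (l : ℝ)) = (z : ℝ)) ∧
    (v ≠ 0 → w ≠ 0 →
      ∑ k ∈ Finset.range (m + 1), (-1 : ℝ) ^ k *
        ((Nat.factorial (2 * m) : ℝ) /
          ((Nat.factorial (2 * m - 2 * k) : ℝ) * (Nat.factorial k : ℝ))) *
        2 ^ (2 * m - k) * ⟪v, w⟫ ^ (2 * m - 2 * k) * ‖v‖ ^ (2 * k) * ‖w‖ ^ (2 * k) *
        ∏ l ∈ Finset.Ico k m, ((n : ℝ) + 4 * (m : ℝ) - 4 - 2 * (l : ℝ))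
      = (Nat.factorial (2 * m) : ℝ) * 2 ^ (2 * m) *
        (∏ l ∈ Finset.range m, ((n : ℝ) + 4 * (m : ℝ) - 4 - 2 * (l : ℝ))) *
        pmVal n m (⟪v, w⟫ / (‖v‖ * ‖w‖)) * ‖v‖ ^ (2 * m) * ‖w‖ ^ (2 * m)) := by
  refine ⟨delta_exists_int_eq n m hvw hv hw, fun hv0 hw0 => ?_⟩
  exact delta_eq_pmVal n m (prod_shifted_pos n m hn).ne'
    (norm_ne_zero_iff.mpr hv0) (norm_ne_zero_iff.mpr hw0)

/-- `δ_m(v,w)` is an integer, and for nonzero `v, w` it equals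
`(2m)! 2^{2m} ∏_{l=0}^{m-1}(n+4m-4-2l) · p_m(cos∠(v,w)) ‖v‖^{2m}‖w‖^{2m}`. -/
theorem statement7 (n m : ℕ) (hn : 1 ≤ n) (hm : 1 ≤ m)
    (v w : E n)
    (hv : ∃ a : ℤ, ‖v‖ ^ 2 = (a : ℝ)) (hw : ∃ a : ℤ, ‖w‖ ^ 2 = (a : ℝ))
    (hvw : ∃ a : ℤ, ⟪v, w⟫ = (a : ℝ) / 2) :
    (∃ z : ℤ,
      ∑ k ∈ Finset.range (m + 1), (-1 : ℝ) ^ k *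
        ((Nat.factorial (2 * m) : ℝ) /
          ((Nat.factorial (2 * m - 2 * k) : ℝ) * (Nat.factorial k : ℝ))) *
        2 ^ (2 * m - k) * ⟪v, w⟫ ^ (2 * m - 2 * k) * ‖v‖ ^ (2 * k) * ‖w‖ ^ (2 * k) *
        ∏ l ∈ Finset.Ico k m, ((n : ℝ) + 4 * (m : ℝ) - 4 - 2 * (l : ℝ)) = (z : ℝ)) ∧
    (v ≠ 0 → w ≠ 0 →
      ∑ k ∈ Finset.range (m + 1), (-1 : ℝ) ^ k *
        ((Nat.factorial (2 * m) : ℝ) /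
          ((Nat.factorial (2 * m - 2 * k) : ℝ) * (Nat.factorial k : ℝ))) *
        2 ^ (2 * m - k) * ⟪v, w⟫ ^ (2 * m - 2 * k) * ‖v‖ ^ (2 * k) * ‖w‖ ^ (2 * k) *
        ∏ l ∈ Finset.Ico k m, ((n : ℝ) + 4 * (m : ℝ) - 4 - 2 * (l : ℝ))
      = (Nat.factorial (2 * m) : ℝ) * 2 ^ (2 * m) *
        (∏ l ∈ Finset.range m, ((n : ℝ) + 4 * (m : ℝ) - 4 - 2 * (l : ℝ))) *
        pmVal n m (⟪v, w⟫ / (‖v‖ * ‖w‖)) * ‖v‖ ^ (2 * m) * ‖w‖ ^ (2 * m)) :=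
  statement7_general n m hn v w hv hw hvw

end Heat
end
end

section
/- For every real number w and every integer r ≥ 1, Σ_{p=0}^r (−1)^{r−p} · (w+2p−2r) · C(w, r−p) · C(w+p−2r−1, p) = 0; and for r = 0 the sum equals w. Here C(z,k) := (Π_{a=0}^{k−1}(z−a))/k! is the generalized binomial coefficient for real z and nonnegative integer k. -/
/-!
Reindexing by `q = r - p` and negating the upper index of the second binomial coefficient turn
the summand into `(-1)^r (w - 2q) C(w,q) C(2r-w, r-q)`. Since
`(w - 2q) C(w,q) = w (C(w-1,q) - C(w-1,q-1))`, Chu–Vandermonde evaluates the sum to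
`(-1)^r w (C(2r-1,r) - C(2r-1,r-1))`, which vanishes for `r ≥ 1` by symmetry of Pascal's triangle.
-/

noncomputable section

open MvPolynomial MeasureTheory Finset
open scoped RealInnerProductSpace Manifold

namespace Ring

variable {R : Type*} [CommRing R] [BinomialRing R]

theorem choose_eq_neg_one_pow_mul_choose (z : R) (k : ℕ) :
    choose z k = (-1) ^ k * choose (k - 1 - z) k := by
  rw [← neg_neg z, choose_neg, Units.smul_def, zsmul_eq_mul, Int.cast_negOnePow_natCast,
    neg_neg, neg_add_eq_sub, sub_sub, sub_sub, add_comm z 1]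

theorem succ_mul_choose_succ (a : R) (k : ℕ) :
    (k + 1) * choose a (k + 1) = a * choose (a - 1) k := by
  simpa [mul_comm] using choose_smul_choose a (Nat.le_add_left 1 k)

theorem sub_two_mul_mul_choose_succ (a : R) (k : ℕ) :
    (a - 2 * (k + 1)) * choose a (k + 1) = a * (choose (a - 1) (k + 1) - choose (a - 1) k) := by
  have pascal := choose_succ_succ (a - 1) k
  rw [sub_add_cancel] at pascal
  linear_combination a * pascal - 2 * succ_mul_choose_succ a k

theorem sum_antidiagonal_sub_two_mul_mul_choose_mul_choose (a b : R) (r : ℕ) :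
    ∑ ij ∈ antidiagonal (r + 1), (a - 2 * ij.1) * choose a ij.1 * choose b ij.2 =
      a * (choose (a - 1 + b) (r + 1) - choose (a - 1 + b) r) := by
  rw [Nat.sum_antidiagonal_succ, add_choose_eq _ (Commute.all _ _),
    add_choose_eq _ (Commute.all _ _), Nat.sum_antidiagonal_succ]
  simp only [Nat.cast_add, Nat.cast_one, sub_two_mul_mul_choose_succ]
  simp only [Nat.cast_zero, mul_zero, sub_zero, choose_zero_right, mul_one, mul_sub, sub_mul,
    sum_sub_distrib, mul_assoc, ← mul_sum]
  ring

end Ring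

namespace Heat

theorem genBinom_eq_choose (z : ℝ) (k : ℕ) : genBinom z k = Ring.choose z k := by
  rw [genBinom, Ring.choose_eq_smul, ← Polynomial.aeval_eq_smeval, Polynomial.aeval_def,
    ← Polynomial.eval_map, descPochhammer_map, descPochhammer_eval_eq_prod_range, smul_eq_mul,
    div_eq_inv_mul]

/-- `∑_{p=0}^r (-1)^{r-p} (w+2p-2r) C(w,r-p) C(w+p-2r-1,p)` equals `w`
for `r = 0` and `0` for `r ≥ 1`. -/
theorem statement13 (w : ℝ) (r : ℕ) :
    ∑ p ∈ Finset.range (r + 1),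
      (-1 : ℝ) ^ (r - p) * (w + 2 * (p : ℝ) - 2 * (r : ℝ)) *
        genBinom w (r - p) * genBinom (w + (p : ℝ) - 2 * (r : ℝ) - 1) p =
    if r = 0 then w else 0 := by
  rcases r with _ | r
  · simp [genBinom]
  have summand : ∀ ij ∈ antidiagonal (r + 1),
      (-1 : ℝ) ^ ij.1 * (w + 2 * (ij.2 : ℝ) - 2 * ((r + 1 : ℕ) : ℝ)) * genBinom w ij.1 *
          genBinom (w + (ij.2 : ℝ) - 2 * ((r + 1 : ℕ) : ℝ) - 1) ij.2 =
        (-1) ^ (r + 1) * ((w - 2 * ij.1) * Ring.choose w ij.1 *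
          Ring.choose (2 * ((r + 1 : ℕ) : ℝ) - w) ij.2) := by
    rintro ⟨q, p⟩ hqp
    rw [genBinom_eq_choose, genBinom_eq_choose, Ring.choose_eq_neg_one_pow_mul_choose _ p,
      show (p : ℝ) - 1 - (w + p - 2 * ((r + 1 : ℕ) : ℝ) - 1) = 2 * ((r + 1 : ℕ) : ℝ) - w by ring,
      ← HasAntidiagonal.mem_antidiagonal.mp hqp, pow_add]
    push_cast
    ring
  rw [if_neg r.succ_ne_zero, ← Nat.sum_antidiagonal_eq_sum_range_succ (fun p q =>
      (-1 : ℝ) ^ q * (w + 2 * (p : ℝ) - 2 * ((r + 1 : ℕ) : ℝ)) * genBinom w q *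
        genBinom (w + (p : ℝ) - 2 * ((r + 1 : ℕ) : ℝ) - 1) p), ← Nat.sum_antidiagonal_swap]
  simp only [Prod.fst_swap, Prod.snd_swap]
  rw [sum_congr rfl summand, ← mul_sum, Ring.sum_antidiagonal_sub_two_mul_mul_choose_mul_choose,
    show w - 1 + (2 * ((r + 1 : ℕ) : ℝ) - w) = ((2 * r + 1 : ℕ) : ℝ) by push_cast; ring,
    Ring.choose_natCast, Ring.choose_natCast, Nat.choose_symm_half, sub_self, mul_zero, mul_zero]

end Heat
end
end

section
/- Let d ≥ 1 and m ≥ 0 be integers and let n be a real number such that n+2m−4−2j ≠ 0 for all integers 0 ≤ j ≤ 2d−2. Define r_{k,m} := 1/( 2^k · k! · Π_{l=0}^{k−1}(n+2m−4−2l) ). Then Σ_{k=0}^{d} ( Π_{l=k}^{d−1} 1/( (2l−2d)(n−2+2m−2d−2l) ) ) · r_{k,m} = 0. -/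
noncomputable section

open MvPolynomial MeasureTheory Finset
open scoped RealInnerProductSpace Manifold

namespace Heat

/-! With `c = n + 2m - 4`, multiplying the `k`-th summand by `2^d d! ∏_{j<2d-1} (c - 2j)` clears
every denominator: `∏_{l<k} (c - 2l)` cancels, the factors `n - 2 + 2m - 2d - 2l` for `k ≤ l < d`
are the `c - 2j` with `d + k - 1 ≤ j < 2d - 1`, and `∏_{k≤l<d} (2l - 2d) = (-2)^(d-k) (d-k)!`.
What is left is `(-1)^(d-k) C(d,k) q(k)` with `q(x) = ∏_{i<d-1} (c - 2(x + i))`, so the sum is the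
`d`-th forward difference of the polynomial `q` of degree `d - 1`, which vanishes. -/

section RecursionIdentity

open Polynomial

theorem sum_neg_one_pow_mul_choose_mul_eval_eq_zero {R : Type*} [CommRing R] {P : R[X]} {d : ℕ}
    (hP : P.natDegree < d) :
    ∑ k ∈ range (d + 1), (-1 : R) ^ (d - k) * d.choose k * P.eval (k : R) = 0 := by
  have h := congrFun (fwdDiff_iter_eq_zero_of_degree_lt hP) 0
  rw [fwdDiff_iter_eq_sum_shift] at h
  simpa [zsmul_eq_mul] using h

theorem natDegree_prod_range_sub_two_mul_lt {R : Type*} [CommRing R] (c : R) {d : ℕ}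
    (hd : 1 ≤ d) :
    (∏ i ∈ range (d - 1), (Polynomial.C c - 2 * (Polynomial.X + Polynomial.C (i : R)))).natDegree
      < d := by
  refine (natDegree_prod_le _ _).trans_lt ?_
  have hlinear : ∀ i ∈ range (d - 1),
      (Polynomial.C c - 2 * (Polynomial.X + Polynomial.C (i : R))).natDegree ≤ 1 :=
    fun i _ => by compute_degree
  calc _ ≤ ∑ _i ∈ range (d - 1), 1 := sum_le_sum hlinear
    _ < d := by simp; omega

theorem prod_Ico_two_mul_sub {R : Type*} [CommRing R] {k d : ℕ} (hk : k ≤ d) :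
    ∏ l ∈ Ico k d, (2 * (l : R) - 2 * d) = (-1) ^ (d - k) * 2 ^ (d - k) * (d - k).factorial := by
  have h : ∀ l ∈ Ico k d, (2 * (l : R) - 2 * d) = -1 * 2 * ((d - l : ℕ) : R) := by
    intro l hl
    rw [Nat.cast_sub (mem_Ico.mp hl).2.le]; ring
  rw [prod_congr rfl h, prod_mul_distrib, prod_mul_distrib, prod_const, prod_const, Nat.card_Ico,
    ← Nat.cast_prod, prod_Ico_reflect (fun j => j) _ (by omega : d ≤ d + 1),
    ← prod_Ico_id_eq_factorial, show d + 1 - d = 1 by omega, show d + 1 - k = d - k + 1 by omega]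

theorem summand_mul_denom_eq_neg_one_pow_mul_choose {K : Type*} [Field K] [CharZero K] {c : K} {d k : ℕ} (hk : k ≤ d)
    (hd : 1 ≤ d) (hc : ∀ j : ℕ, j ≤ 2 * d - 2 → c - 2 * j ≠ 0) :
    (∏ l ∈ Ico k d, 1 / ((2 * (l : K) - 2 * d) * (c + 2 - 2 * d - 2 * l))) *
        (1 / (2 ^ k * k.factorial * ∏ l ∈ range k, (c - 2 * l))) *
        (2 ^ d * d.factorial * ∏ j ∈ range (2 * d - 1), (c - 2 * j)) =
      (-1) ^ (d - k) * d.choose k * ∏ i ∈ range (d - 1), (c - 2 * (k + i)) := by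
  have hsplit : ∏ j ∈ range (2 * d - 1), (c - 2 * j) = (∏ l ∈ range k, (c - 2 * l)) *
      (∏ i ∈ range (d - 1), (c - 2 * (k + i))) * ∏ l ∈ Ico k d, (c + 2 - 2 * d - 2 * l) := by
    rw [show 2 * d - 1 = k + (d - 1) + (d - k) by omega, prod_range_add, prod_range_add,
      prod_Ico_eq_prod_range]
    push_cast [Nat.cast_sub hd]
    ring_nf
  have hfull : ∏ j ∈ range (2 * d - 1), (c - 2 * j) ≠ 0 :=
    prod_ne_zero_iff.mpr fun j hj => hc j (by rw [mem_range] at hj; omega)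
  rw [hsplit] at hfull ⊢
  obtain ⟨⟨hA, hQ⟩, hB⟩ := mul_ne_zero_iff.mp hfull |>.imp_left mul_ne_zero_iff.mp
  simp only [one_div, mul_inv, prod_mul_distrib, prod_inv_distrib]
  rw [prod_Ico_two_mul_sub hk, Nat.cast_choose K hk]
  obtain ⟨e, rfl⟩ := Nat.exists_eq_add_of_le hk
  simp only [Nat.add_sub_cancel_left, mul_inv]
  rw [← inv_pow (-1 : K), inv_neg_one]
  field_simp
  ring

end RecursionIdentity

/-- the recursion identity for the numbers `r_{k,m}`. -/
theorem statement14 (d m : ℕ) (hd : 1 ≤ d) (n : ℝ)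
    (hnm : ∀ j : ℕ, j ≤ 2 * d - 2 → n + 2 * (m : ℝ) - 4 - 2 * (j : ℝ) ≠ 0) :
    ∑ k ∈ Finset.range (d + 1),
      (∏ l ∈ Finset.Ico k d,
        1 / ((2 * (l : ℝ) - 2 * (d : ℝ)) *
          (n - 2 + 2 * (m : ℝ) - 2 * (d : ℝ) - 2 * (l : ℝ)))) *
      (1 / ((2 : ℝ) ^ k * (Nat.factorial k : ℝ) *
        ∏ l ∈ Finset.range k, (n + 2 * (m : ℝ) - 4 - 2 * (l : ℝ)))) = 0 := by
  set c : ℝ := n + 2 * m - 4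
  have hfactor : ∀ l : ℕ, n - 2 + 2 * (m : ℝ) - 2 * d - 2 * l = c + 2 - 2 * d - 2 * l :=
    fun l => by ring
  have hD : (2 : ℝ) ^ d * d.factorial * ∏ j ∈ range (2 * d - 1), (c - 2 * j) ≠ 0 :=
    mul_ne_zero (by positivity) <|
      prod_ne_zero_iff.mpr fun j hj => hnm j (by rw [mem_range] at hj; omega)
  refine (mul_eq_zero.mp ?_).resolve_right hD
  simp only [hfactor, sum_mul]
  calc _ = ∑ k ∈ range (d + 1), (-1 : ℝ) ^ (d - k) * d.choose k *
        (∏ i ∈ range (d - 1), (Polynomial.C c - 2 * (Polynomial.X + Polynomial.C (i : ℝ)))).eval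
          (k : ℝ) := by
        refine sum_congr rfl fun k hk => ?_
        rw [summand_mul_denom_eq_neg_one_pow_mul_choose (Nat.lt_succ_iff.mp (mem_range.mp hk)) hd hnm]
        simp [Polynomial.eval_prod]
    _ = 0 := sum_neg_one_pow_mul_choose_mul_eval_eq_zero (natDegree_prod_range_sub_two_mul_lt c hd)

end Heat
end
end

section
/- Fix a positive integer n. Define for each integer m ≥ 0 the polynomial p_m(c) := Σ_{k=0}^m (−1)^k c^{2m−2k} / ( (2m−2k)! · k! · 2^k · Π_{l=0}^{k−1}(n+4m−4−2l) ) ∈ ℚ[c]. Then for every m ≥ 0 one has the identity of polynomials Σ_{k=0}^m p_{m−k}(c) / a_{k,m} = c^{2m}/(2m)!, where a_{k,m} := 2^k · k! · Π_{l=1}^{k}(n+4m−2k−2l). -/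
noncomputable section

open MvPolynomial MeasureTheory Finset
open scoped RealInnerProductSpace Manifold

namespace Heat

/-! Put `x = n + 4m`. Then `a_{k,m} = 2^k k! ∏_{k<e≤2k} (x - 2e)`, and the factor of `p_{m-k}` attached
to `c^{2(m-k)-2j}` is `∏_{2k+1<e≤2k+1+j} (x - 2e)`. Collecting the coefficient of `c^{2(m-s)}`, `s = k + j`,
the identity reduces to
`∑_{k ≤ s} (-1)^{s-k} C(s,k) / (∏_{k<e≤2k} (x - 2e) · ∏_{2k+1<e≤s+k+1} (x - 2e)) = 0` for `1 ≤ s ≤ m`.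
This sum telescopes: `s` times its `k`-th term is `W (k+1) - W k` for
`W k = (-1)^{s+1-k} k C(s,k) / ∏_{k<e≤s+k} (x - 2e)`, which vanishes at `k = 0` and `k = s + 1`.
All the factors `x - 2e` with `1 ≤ e ≤ 2s ≤ 2m` are at least `n > 0`. -/

section FallProd

variable {K : Type*} [Field K] (x : K)

def fallProd (a b : ℕ) : K := ∏ e ∈ Ioc a b, (x - 2 * e)

lemma fallProd_self (a : ℕ) : fallProd x a a = 1 := by simp [fallProd]

lemma fallProd_succ (a : ℕ) : fallProd x a (a + 1) = x - 2 * (a + 1 : ℕ) := by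
  simp [fallProd]

lemma fallProd_mul_fallProd {a b c : ℕ} (hab : a ≤ b) (hbc : b ≤ c) :
    fallProd x a b * fallProd x b c = fallProd x a c :=
  prod_Ioc_consecutive _ hab hbc

lemma fallProd_eq_prod_range (a j : ℕ) :
    fallProd x a (a + j) = ∏ i ∈ range j, (x - 2 * (a + 1 + i : ℕ)) := by
  rw [fallProd, ← Ico_add_one_add_one_eq_Ioc, prod_Ico_eq_prod_range]
  simp only [add_tsub_add_eq_tsub_right, add_tsub_cancel_left]

variable {x}

lemma fallProd_ne_zero {a b : ℕ} (hx : ∀ e ∈ Ioc a b, x - 2 * e ≠ 0) : fallProd x a b ≠ 0 :=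
  prod_ne_zero_iff.mpr hx

lemma fallProd_partial_fractions {s k : ℕ} (hk : k < s) (hx : ∀ e ∈ Ioc 0 (2 * s), x - 2 * e ≠ 0) :
    s / (fallProd x k (2 * k) * fallProd x (2 * k + 1) (s + k + 1)) =
      (s - k) / fallProd x (k + 1) (s + k + 1) + k / fallProd x k (s + k) := by
  have hx' : ∀ a b, b ≤ 2 * s → fallProd x a b ≠ 0 := fun a b hb =>
    fallProd_ne_zero fun e he => hx e (Ioc_subset_Ioc (Nat.zero_le a) hb he)
  have hgap : fallProd x k (2 * k) * (x - 2 * (2 * k + 1 : ℕ)) * fallProd x (2 * k + 1) (s + k + 1) =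
      fallProd x k (s + k + 1) := by
    rw [← fallProd_succ, fallProd_mul_fallProd x (by omega) (by omega),
      fallProd_mul_fallProd x (by omega) (by omega)]
  have hlow : fallProd x k (s + k) = (x - 2 * (k + 1 : ℕ)) * fallProd x (k + 1) (s + k) := by
    rw [← fallProd_succ, fallProd_mul_fallProd x (by omega) (by omega)]
  have hhigh (a : ℕ) (ha : a ≤ s + k) :
      fallProd x a (s + k + 1) = fallProd x a (s + k) * (x - 2 * (s + k + 1 : ℕ)) := by
    rw [← fallProd_succ, fallProd_mul_fallProd x ha (by omega)]
  rw [hhigh k (by omega), hlow] at hgap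
  rw [hhigh (k + 1) (by omega), hlow]
  have hQ := hx' (k + 1) (s + k) (by omega)
  have hu : x - 2 * (k + 1 : ℕ) ≠ 0 := hx _ (by simp; omega)
  have hv : x - 2 * (s + k + 1 : ℕ) ≠ 0 := hx _ (by simp; omega)
  have hP : fallProd x k (2 * k) * fallProd x (2 * k + 1) (s + k + 1) ≠ 0 :=
    mul_ne_zero (hx' _ _ (by omega)) (hx' _ _ (by omega))
  rw [div_add_div _ _ (mul_ne_zero hQ hv) (mul_ne_zero hu hQ), div_eq_div_iff hP (by positivity)]
  push_cast at hgap ⊢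
  linear_combination (-(s : K) * fallProd x (k + 1) (s + k)) * hgap

lemma sum_alternating_choose_div_fallProd [CharZero K] {s : ℕ} (hs : s ≠ 0)
    (hx : ∀ e ∈ Ioc 0 (2 * s), x - 2 * e ≠ 0) :
    ∑ k ∈ range (s + 1), (-1) ^ (s - k) * (s.choose k : K) /
      (fallProd x k (2 * k) * fallProd x (2 * k + 1) (s + k + 1)) = 0 := by
  set W : ℕ → K := fun k => (-1) ^ (s + 1 - k) * k * s.choose k / fallProd x k (s + k)
  have hstep : ∀ k ∈ range (s + 1), (s : K) * ((-1) ^ (s - k) * (s.choose k : K) /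
      (fallProd x k (2 * k) * fallProd x (2 * k + 1) (s + k + 1))) = W (k + 1) - W k := by
    intro k hk
    rcases (Nat.lt_succ_iff.mp (mem_range.mp hk)).lt_or_eq with hks | rfl
    · have hchoose : ((s.choose (k + 1) : ℕ) : K) * (k + 1 : ℕ) = s.choose k * (s - k : ℕ) := by
        rw [← Nat.cast_mul, Nat.choose_succ_right_eq, Nat.cast_mul]
      push_cast [Nat.cast_sub hks.le] at hchoose
      have hsign : (-1 : K) ^ (s + 1 - k) = -(-1) ^ (s - k) := by
        rw [Nat.sub_add_comm hks.le, pow_succ]; ring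
      simp only [W, Nat.add_sub_add_right, hsign, ← add_assoc]
      calc _ = (-1) ^ (s - k) * (s.choose k : K) *
              (s / (fallProd x k (2 * k) * fallProd x (2 * k + 1) (s + k + 1))) := by ring
        _ = (-1) ^ (s - k) * (s.choose k : K) *
              ((s - k) / fallProd x (k + 1) (s + k + 1) + k / fallProd x k (s + k)) := by
          rw [fallProd_partial_fractions hks hx]
        _ = _ := by
          push_cast
          linear_combination (-(-1) ^ (s - k) / fallProd x (k + 1) (s + k + 1)) * hchoose
    · simp only [tsub_self, pow_zero, Nat.choose_self, Nat.cast_one, mul_one, two_mul, fallProd_self,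
        one_div, Nat.cast_add, one_mul, Nat.choose_succ_self, CharP.cast_eq_zero, mul_zero, zero_div,
        add_tsub_cancel_left, pow_one, neg_mul, zero_sub, W]
      ring
  have hsum : (s : K) * ∑ k ∈ range (s + 1), (-1) ^ (s - k) * (s.choose k : K) /
      (fallProd x k (2 * k) * fallProd x (2 * k + 1) (s + k + 1)) = 0 := by
    rw [mul_sum, sum_congr rfl hstep, sum_range_sub]
    simp [W]
  exact (mul_eq_zero.mp hsum).resolve_left (Nat.cast_ne_zero.mpr hs)

end FallProd

lemma pmVal_term_div_eq {n m s k : ℕ} (c : ℝ) (hks : k ≤ s) (hsm : s ≤ m) :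
    (-1 : ℝ) ^ (s - k) * c ^ (2 * (m - k) - 2 * (s - k)) /
        ((Nat.factorial (2 * (m - k) - 2 * (s - k)) : ℝ) * (Nat.factorial (s - k) : ℝ) *
          2 ^ (s - k) * ∏ l ∈ range (s - k), ((n : ℝ) + 4 * ((m - k : ℕ) : ℝ) - 4 - 2 * l)) /
        ((2 : ℝ) ^ k * (Nat.factorial k : ℝ) *
          ∏ l ∈ Icc 1 k, ((n : ℝ) + 4 * (m : ℝ) - 2 * (k : ℝ) - 2 * (l : ℝ))) =
      c ^ (2 * (m - s)) / ((Nat.factorial (2 * (m - s)) : ℝ) * 2 ^ s * (Nat.factorial s : ℝ)) *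
        ((-1) ^ (s - k) * (s.choose k : ℝ) /
          (fallProd ((n : ℝ) + 4 * m) k (2 * k) * fallProd ((n : ℝ) + 4 * m) (2 * k + 1) (s + k + 1))) := by
  have hA : ∏ l ∈ Icc 1 k, ((n : ℝ) + 4 * (m : ℝ) - 2 * (k : ℝ) - 2 * (l : ℝ)) =
      fallProd ((n : ℝ) + 4 * m) k (2 * k) := by
    rw [two_mul k, fallProd_eq_prod_range, ← Ico_add_one_right_eq_Icc, prod_Ico_eq_prod_range,
      add_tsub_cancel_right]
    refine prod_congr rfl fun l _ => ?_
    push_cast; ring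
  have hB : ∏ l ∈ range (s - k), ((n : ℝ) + 4 * ((m - k : ℕ) : ℝ) - 4 - 2 * l) =
      fallProd ((n : ℝ) + 4 * m) (2 * k + 1) (s + k + 1) := by
    rw [show s + k + 1 = 2 * k + 1 + (s - k) by omega, fallProd_eq_prod_range]
    refine prod_congr rfl fun l _ => ?_
    push_cast [Nat.cast_sub (hks.trans hsm)]; ring
  have hfact : (s.choose k : ℝ) * k.factorial * (s - k).factorial = s.factorial := by
    exact_mod_cast Nat.choose_mul_factorial_mul_factorial hks
  have hpow : (2 : ℝ) ^ (s - k) * 2 ^ k = 2 ^ s := by rw [← pow_add, Nat.sub_add_cancel hks]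
  rw [hA, hB, show 2 * (m - k) - 2 * (s - k) = 2 * (m - s) by omega, ← hfact, ← hpow]
  have hC : (s.choose k : ℝ) ≠ 0 := by exact_mod_cast (Nat.choose_pos hks).ne'
  field_simp

/-- `∑_{k=0}^m p_{m-k}/a_{k,m} = c^{2m}/(2m)!`. -/
theorem statement15 (n : ℕ) (hn : 0 < n) (m : ℕ) (c : ℝ) :
    ∑ k ∈ Finset.range (m + 1),
      pmVal n (m - k) c /
        ((2 : ℝ) ^ k * (Nat.factorial k : ℝ) *
          ∏ l ∈ Finset.Icc 1 k, ((n : ℝ) + 4 * (m : ℝ) - 2 * (k : ℝ) - 2 * (l : ℝ))) =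
    c ^ (2 * m) / (Nat.factorial (2 * m) : ℝ) := by
  have hx : ∀ s ≤ m, ∀ e ∈ Ioc 0 (2 * s), ((n : ℝ) + 4 * m) - 2 * e ≠ 0 := by
    intro s hs e he
    have hem : (e : ℝ) ≤ 2 * m := by exact_mod_cast (mem_Ioc.mp he).2.trans (by omega)
    have hn' : (0 : ℝ) < n := by exact_mod_cast hn
    exact ne_of_gt (by linarith)
  simp only [pmVal, sum_div]
  rw [sum_congr rfl fun k hk => by rw [← Nat.sub_add_comm (Nat.lt_succ_iff.mp (mem_range.mp hk))],
    ← sum_range_diag_flip]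
  trans ∑ s ∈ range (m + 1), if s = 0 then c ^ (2 * m) / (Nat.factorial (2 * m) : ℝ) else 0
  · refine sum_congr rfl fun s hs => ?_
    have hsm : s ≤ m := Nat.lt_succ_iff.mp (mem_range.mp hs)
    rw [sum_congr rfl fun k hk => pmVal_term_div_eq c (Nat.lt_succ_iff.mp (mem_range.mp hk)) hsm,
      ← mul_sum]
    rcases eq_or_ne s 0 with rfl | hs0
    · simp [fallProd_self]
    · rw [sum_alternating_choose_div_fallProd hs0 (hx s hsm), mul_zero, if_neg hs0]
  · rw [sum_ite_eq']
    simp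

end Heat
end
end
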